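/- Let β ≥ 0 and κ > 0. Then for any path γ in B_N, E^U_{N,β,κ}[W_γ] = (tanh 2κ)^{|γ|} · Σ_{N,β,κ}[γ] / Σ_{N,β,κ}[0]. Consequently, if γ₁ and γ₂ are nontrivial paths with disjoint supports and the same endpoints, then ρ_N(γ₁,γ₂) := E^U_{N,β,κ}[W_{γ₁}] E^U_{N,β,κ}[W_{γ₂}] / E^U_{N,β,κ}[W_{γ₁+γ₂}] = Σ_{N,β,κ}[γ₁] Σ_{N,β,κ}[γ₂] / (Σ_{N,β,κ}[γ₁+γ₂] Σ_{N,β,κ}[0]). -/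

import Mathlib

/-!
Expanding each plaquette weight in characters of `ℤ₂`,
`exp (2β ρ(g)) = cosh 2β · (1 + tanh 2β · ρ(g)) = cosh 2β · Σⱼ φ_β(j) ρ(j g)`,
turns the product over plaquettes into a sum over 2-forms `ω` of `∏ φ_β(ω) · ρ(Σ_p ω(p) dσ(p))`,
and `Σ_p ω(p) dσ(p) = Σ_e δω(e) σ(e)`. The sum over `σ` then factorises over the edges, each
contributing `2 cosh 2κ · φ_κ(δω(e) + γ[e])`. Pulling out `∏_e φ_κ(γ[e]) = tanh(2κ)^|γ|` and
dividing by the same expansion for the empty path gives the formula for `E^U[W_γ]`; the ratio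
identity is then algebra, as `|γ₁ + γ₂| = |γ₁| + |γ₂|` for disjoint supports.
-/

open scoped BigOperators Classical ENNReal Topology
open Filter

noncomputable section

namespace LatticeHiggs

/-! ## The lattice `ℤ^m` and its cells -/

abbrev Vertex (m : ℕ) := Fin m → ℤ

/-- A positively oriented edge of `ℤ^m`. -/
structure PEdge (m : ℕ) where
  base : Vertex m
  dir : Fin m
deriving DecidableEq

/-- A (positively oriented, when `dir1 < dir2`) plaquette of `ℤ^m`. -/
structure PPlaq (m : ℕ) where
  base : Vertex m
  dir1 : Fin m
  dir2 : Fin m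
deriving DecidableEq

/-- A 3-cell of `ℤ^m`. -/
structure PCube (m : ℕ) where
  base : Vertex m
  d1 : Fin m
  d2 : Fin m
  d3 : Fin m
deriving DecidableEq

def unitVec (m : ℕ) (j : Fin m) : Vertex m := fun i => if i = j then 1 else 0

def PEdge.head {m : ℕ} (e : PEdge m) : Vertex m := e.base + unitVec m e.dir

/-- The vertices of the box `B_N = [-N,N]^m ∩ ℤ^m`. -/
def boxV (m N : ℕ) : Finset (Vertex m) :=
  Fintype.piFinset fun _ => Finset.Icc (-(N : ℤ)) (N : ℤ)

/-- The positively oriented edges of `B_N` (i.e. `C₁(B_N)⁺`). -/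
def boxPE (m N : ℕ) : Finset (PEdge m) :=
  ((boxV m N ×ˢ (Finset.univ : Finset (Fin m))).image fun p => ⟨p.1, p.2⟩).filter fun e =>
    e.head ∈ boxV m N

def PPlaq.corners {m : ℕ} (p : PPlaq m) : List (Vertex m) :=
  [p.base, p.base + unitVec m p.dir1, p.base + unitVec m p.dir2,
    p.base + unitVec m p.dir1 + unitVec m p.dir2]

/-- The positively oriented plaquettes of `B_N` (i.e. `C₂(B_N)⁺`). -/
def plqBox (m N : ℕ) : Finset (PPlaq m) :=
  (((boxV m N ×ˢ (Finset.univ : Finset (Fin m))) ×ˢ (Finset.univ : Finset (Fin m))).image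
        fun p => ⟨p.1.1, p.1.2, p.2⟩).filter fun p =>
    p.dir1 < p.dir2 ∧ ∀ v ∈ p.corners, v ∈ boxV m N

/-- The four positively oriented edges in the boundary of a plaquette. -/
def PPlaq.bEdges {m : ℕ} (p : PPlaq m) : Finset (PEdge m) :=
  {⟨p.base, p.dir1⟩, ⟨p.base + unitVec m p.dir1, p.dir2⟩,
    ⟨p.base + unitVec m p.dir2, p.dir1⟩, ⟨p.base, p.dir2⟩}

/-- The six faces of a 3-cell. -/
def PCube.faces {m : ℕ} (c : PCube m) : List (PPlaq m) :=
  [⟨c.base, c.d1, c.d2⟩, ⟨c.base + unitVec m c.d3, c.d1, c.d2⟩,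
    ⟨c.base, c.d1, c.d3⟩, ⟨c.base + unitVec m c.d2, c.d1, c.d3⟩,
    ⟨c.base, c.d2, c.d3⟩, ⟨c.base + unitVec m c.d1, c.d2, c.d3⟩]

/-! ## `ℤ₂`-valued forms on the box -/

/-- `Ω¹(B_N, ℤ₂)`: a 1-form is determined by its values on positive edges. -/
abbrev Config1 (m N : ℕ) := {e : PEdge m // e ∈ boxPE m N} → ZMod 2

/-- `Ω²(B_N, ℤ₂)`. -/
abbrev Config2 (m N : ℕ) := {p : PPlaq m // p ∈ plqBox m N} → ZMod 2

def evalE {m N : ℕ} (σ : Config1 m N) (e : PEdge m) : ZMod 2 :=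
  if h : e ∈ boxPE m N then σ ⟨e, h⟩ else 0

def evalP {m N : ℕ} (ω : Config2 m N) (p : PPlaq m) : ZMod 2 :=
  if h : p ∈ plqBox m N then ω ⟨p, h⟩ else 0

/-- `dσ(p)` (mod 2, so orientation signs are irrelevant). -/
def d1 {m N : ℕ} (σ : Config1 m N) (p : PPlaq m) : ZMod 2 :=
  ∑ e ∈ p.bEdges, evalE σ e

/-- the nontrivial character of `ℤ₂`. -/
def rho2 (g : ZMod 2) : ℝ := if g = 0 then 1 else -1

/-- The unitary gauge Boltzmann weight
`exp(β Σ_{p ∈ C₂(B_N)} ρ(dσ(p)) + κ Σ_{e ∈ C₁(B_N)} ρ(σ(e)))`, where the sums run over all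
oriented cells, i.e. twice the corresponding sums over positively oriented cells. -/
def wtU (m N : ℕ) (β κ : ℝ) (σ : Config1 m N) : ℝ :=
  Real.exp (2 * β * ∑ p ∈ plqBox m N, rho2 (d1 σ p) +
    2 * κ * ∑ e ∈ boxPE m N, rho2 (evalE σ e))

/-! ## Paths: 1-chains with coefficients in {-1,0,1} and finite support -/

structure LatPath (m : ℕ) where
  coef : PEdge m → ℤ
  coef_mem : ∀ e, coef e = -1 ∨ coef e = 0 ∨ coef e = 1
  fin : (Function.support coef).Finite

namespace LatPath

variable {m : ℕ}

/-- The support of a path, as a finset of positively oriented edges. -/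
def supp (γ : LatPath m) : Finset (PEdge m) := γ.fin.toFinset

lemma mem_supp (γ : LatPath m) (e : PEdge m) : e ∈ γ.supp ↔ γ.coef e ≠ 0 := by
  simp [supp, Set.Finite.mem_toFinset, Function.mem_support]

/-- The coefficient of the vertex `v` in the boundary 0-chain `∂γ`. -/
def bnd (γ : LatPath m) (v : Vertex m) : ℤ :=
  ∑ e ∈ γ.supp, γ.coef e * ((if e.head = v then 1 else 0) - (if e.base = v then 1 else 0))

/-- The empty path. -/
def zero (m : ℕ) : LatPath m :=
  ⟨fun _ => 0, fun _ => Or.inr (Or.inl rfl), by simp⟩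

/-- Sum of two paths with disjoint supports. -/
def addDisjoint (γ₁ γ₂ : LatPath m) (h : Disjoint γ₁.supp γ₂.supp) : LatPath m where
  coef := γ₁.coef + γ₂.coef
  coef_mem := by
    intro e
    have h0 : γ₁.coef e = 0 ∨ γ₂.coef e = 0 := by
      by_contra hc
      push_neg at hc
      exact Finset.disjoint_left.mp h ((γ₁.mem_supp e).mpr hc.1) ((γ₂.mem_supp e).mpr hc.2)
    rcases h0 with h0 | h0
    · simpa [Pi.add_apply, h0] using γ₂.coef_mem e
    · simpa [Pi.add_apply, h0] using γ₁.coef_mem e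
  fin := (γ₁.fin.union γ₂.fin).subset (Function.support_add γ₁.coef γ₂.coef)

/-- `γ₁` and `γ₂` are open paths with common endpoints, with opposite orientations,
so that `γ₁ + γ₂` is a loop. -/
def SameEndpoints (γ₁ γ₂ : LatPath m) : Prop :=
  ∃ x y : Vertex m, x ≠ y ∧
    (∀ v, γ₁.bnd v = (if v = y then 1 else 0) - (if v = x then 1 else 0)) ∧
    (∀ v, γ₂.bnd v = (if v = x then 1 else 0) - (if v = y then 1 else 0))

end LatPath


/-! ## Wilson line observables and expectations -/

/-- Wilson line observable `W_γ(σ) = ρ(σ(γ))` in unitary gauge. -/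
def wilson {m N : ℕ} (γ : LatPath m) (σ : Config1 m N) : ℝ :=
  rho2 (∑ e ∈ γ.supp, (γ.coef e : ZMod 2) * evalE σ e)

/-- `E^U_{N,β,κ}[W_γ]`. -/
def expU (m N : ℕ) (β κ : ℝ) (γ : LatPath m) : ℝ :=
  (∑ σ : Config1 m N, wtU m N β κ σ * wilson γ σ) / ∑ σ : Config1 m N, wtU m N β κ σ

/-- `⟨W_γ⟩_{β,κ} = lim_{N → ∞} E^U_{N,β,κ}[W_γ]` (the limit exists by the Ginibre
inequalities). -/
def wilsonLim (m : ℕ) (β κ : ℝ) (γ : LatPath m) : ℝ :=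
  limUnder atTop fun N => expU m N β κ γ

/-! ## The rectangular loop `γ⁽ⁿ⁾` and its two complementary open halves -/

section Rect

variable {m : ℕ}

def idx0 (hm : 3 ≤ m) : Fin m := ⟨0, by omega⟩
def idx1 (hm : 3 ≤ m) : Fin m := ⟨1, by omega⟩

/-- `x` lies in the coordinate plane spanned by the directions `0` and `1`. -/
def onPlane (hm : 3 ≤ m) (x : Vertex m) : Prop :=
  ∀ i : Fin m, i ≠ idx0 hm → i ≠ idx1 hm → x i = 0

lemma support_finite_of_bounded (f : PEdge m → ℤ) (K : ℤ)
    (hf : ∀ e, f e ≠ 0 → ∀ i, |e.base i| ≤ K) : (Function.support f).Finite := by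
  have hfin : ((Set.univ : Set (Fin m)).pi fun _ => Set.Icc (-K) K).Finite :=
    Set.Finite.pi fun _ => Set.finite_Icc _ _
  have himg : (((Set.univ : Set (Fin m)).pi fun _ => Set.Icc (-K) K) ×ˢ
      (Set.univ : Set (Fin m))).Finite := hfin.prod Set.finite_univ
  refine Set.Finite.subset (himg.image fun p => (⟨p.1, p.2⟩ : PEdge m)) ?_
  intro e he
  refine ⟨(e.base, e.dir), ⟨?_, trivial⟩, rfl⟩
  intro i _
  exact ⟨(abs_le.mp (hf e he i)).1, (abs_le.mp (hf e he i)).2⟩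

lemma abs_le_of_onPlane (hm : 3 ≤ m) (K : ℤ) (hK : 0 ≤ K) (x : Vertex m)
    (hpl : onPlane hm x) (h0 : |x (idx0 hm)| ≤ K) (h1 : |x (idx1 hm)| ≤ K) :
    ∀ i, |x i| ≤ K := by
  intro i
  by_cases hi0 : i = idx0 hm
  · rw [hi0]; exact h0
  by_cases hi1 : i = idx1 hm
  · rw [hi1]; exact h1
  rw [hpl i hi0 hi1]
  simpa using hK

/-- Coefficients of the open path `γ₁⁽ⁿ⁾`: from `(0,0)` down to `(0,-R)`, right to `(T,-R)`,
up to `(T,0)` (all other coordinates `0`). -/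
def coefG1 (hm : 3 ≤ m) (R T : ℕ) (e : PEdge m) : ℤ :=
  if e.dir = idx1 hm ∧ onPlane hm e.base ∧ e.base (idx0 hm) = 0 ∧
      -(R : ℤ) ≤ e.base (idx1 hm) ∧ e.base (idx1 hm) < 0 then -1
  else if e.dir = idx0 hm ∧ onPlane hm e.base ∧ e.base (idx1 hm) = -(R : ℤ) ∧
      0 ≤ e.base (idx0 hm) ∧ e.base (idx0 hm) < (T : ℤ) then 1
  else if e.dir = idx1 hm ∧ onPlane hm e.base ∧ e.base (idx0 hm) = (T : ℤ) ∧
      -(R : ℤ) ≤ e.base (idx1 hm) ∧ e.base (idx1 hm) < 0 then 1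
  else 0

/-- Coefficients of the complementary open path `γ₂⁽ⁿ⁾`: from `(T,0)` up to `(T,R)`,
left to `(0,R)`, down to `(0,0)`. -/
def coefG2 (hm : 3 ≤ m) (R T : ℕ) (e : PEdge m) : ℤ :=
  if e.dir = idx1 hm ∧ onPlane hm e.base ∧ e.base (idx0 hm) = (T : ℤ) ∧
      0 ≤ e.base (idx1 hm) ∧ e.base (idx1 hm) < (R : ℤ) then 1
  else if e.dir = idx0 hm ∧ onPlane hm e.base ∧ e.base (idx1 hm) = (R : ℤ) ∧
      0 ≤ e.base (idx0 hm) ∧ e.base (idx0 hm) < (T : ℤ) then -1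
  else if e.dir = idx1 hm ∧ onPlane hm e.base ∧ e.base (idx0 hm) = 0 ∧
      0 ≤ e.base (idx1 hm) ∧ e.base (idx1 hm) < (R : ℤ) then -1
  else 0

/-- Coefficients of the rectangular loop `γ⁽ⁿ⁾ = γ₁⁽ⁿ⁾ + γ₂⁽ⁿ⁾` with side lengths `2R` and
`T`. -/
def coefGL (hm : 3 ≤ m) (R T : ℕ) (e : PEdge m) : ℤ :=
  if e.dir = idx1 hm ∧ onPlane hm e.base ∧ e.base (idx0 hm) = (T : ℤ) ∧
      -(R : ℤ) ≤ e.base (idx1 hm) ∧ e.base (idx1 hm) < (R : ℤ) then 1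
  else if e.dir = idx0 hm ∧ onPlane hm e.base ∧ e.base (idx1 hm) = (R : ℤ) ∧
      0 ≤ e.base (idx0 hm) ∧ e.base (idx0 hm) < (T : ℤ) then -1
  else if e.dir = idx1 hm ∧ onPlane hm e.base ∧ e.base (idx0 hm) = 0 ∧
      -(R : ℤ) ≤ e.base (idx1 hm) ∧ e.base (idx1 hm) < (R : ℤ) then -1
  else if e.dir = idx0 hm ∧ onPlane hm e.base ∧ e.base (idx1 hm) = -(R : ℤ) ∧
      0 ≤ e.base (idx0 hm) ∧ e.base (idx0 hm) < (T : ℤ) then 1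
  else 0

lemma coefG1_bound (hm : 3 ≤ m) (R T : ℕ) :
    ∀ e, coefG1 hm R T e ≠ 0 → ∀ i, |e.base i| ≤ (R : ℤ) + (T : ℤ) := by
  intro e he
  have hK : (0 : ℤ) ≤ (R : ℤ) + (T : ℤ) := by positivity
  unfold coefG1 at he
  split_ifs at he with h1 h2 h3
  · obtain ⟨-, hpl, hx, hb1, hb2⟩ := h1
    exact abs_le_of_onPlane hm _ hK _ hpl (by rw [hx]; simpa using hK)
      (by rw [abs_le]; constructor <;> omega)
  · obtain ⟨-, hpl, hx, hb1, hb2⟩ := h2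
    exact abs_le_of_onPlane hm _ hK _ hpl (by rw [abs_le]; constructor <;> omega)
      (by rw [hx, abs_le]; constructor <;> omega)
  · obtain ⟨-, hpl, hx, hb1, hb2⟩ := h3
    exact abs_le_of_onPlane hm _ hK _ hpl (by rw [hx, abs_le]; constructor <;> omega)
      (by rw [abs_le]; constructor <;> omega)
  · exact absurd rfl he

lemma coefG2_bound (hm : 3 ≤ m) (R T : ℕ) :
    ∀ e, coefG2 hm R T e ≠ 0 → ∀ i, |e.base i| ≤ (R : ℤ) + (T : ℤ) := by
  intro e he
  have hK : (0 : ℤ) ≤ (R : ℤ) + (T : ℤ) := by positivity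
  unfold coefG2 at he
  split_ifs at he with h1 h2 h3
  · obtain ⟨-, hpl, hx, hb1, hb2⟩ := h1
    exact abs_le_of_onPlane hm _ hK _ hpl (by rw [hx, abs_le]; constructor <;> omega)
      (by rw [abs_le]; constructor <;> omega)
  · obtain ⟨-, hpl, hx, hb1, hb2⟩ := h2
    exact abs_le_of_onPlane hm _ hK _ hpl (by rw [abs_le]; constructor <;> omega)
      (by rw [hx, abs_le]; constructor <;> omega)
  · obtain ⟨-, hpl, hx, hb1, hb2⟩ := h3
    exact abs_le_of_onPlane hm _ hK _ hpl (by rw [hx]; simpa using hK)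
      (by rw [abs_le]; constructor <;> omega)
  · exact absurd rfl he

lemma coefGL_bound (hm : 3 ≤ m) (R T : ℕ) :
    ∀ e, coefGL hm R T e ≠ 0 → ∀ i, |e.base i| ≤ (R : ℤ) + (T : ℤ) := by
  intro e he
  have hK : (0 : ℤ) ≤ (R : ℤ) + (T : ℤ) := by positivity
  unfold coefGL at he
  split_ifs at he with h1 h2 h3 h4
  · obtain ⟨-, hpl, hx, hb1, hb2⟩ := h1
    exact abs_le_of_onPlane hm _ hK _ hpl (by rw [hx, abs_le]; constructor <;> omega)
      (by rw [abs_le]; constructor <;> omega)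
  · obtain ⟨-, hpl, hx, hb1, hb2⟩ := h2
    exact abs_le_of_onPlane hm _ hK _ hpl (by rw [abs_le]; constructor <;> omega)
      (by rw [hx, abs_le]; constructor <;> omega)
  · obtain ⟨-, hpl, hx, hb1, hb2⟩ := h3
    exact abs_le_of_onPlane hm _ hK _ hpl (by rw [hx]; simpa using hK)
      (by rw [abs_le]; constructor <;> omega)
  · obtain ⟨-, hpl, hx, hb1, hb2⟩ := h4
    exact abs_le_of_onPlane hm _ hK _ hpl (by rw [abs_le]; constructor <;> omega)
      (by rw [hx, abs_le]; constructor <;> omega)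
  · exact absurd rfl he

lemma coefG1_mem (hm : 3 ≤ m) (R T : ℕ) :
    ∀ e, coefG1 hm R T e = -1 ∨ coefG1 hm R T e = 0 ∨ coefG1 hm R T e = 1 := by
  intro e; unfold coefG1; split_ifs <;> norm_num

lemma coefG2_mem (hm : 3 ≤ m) (R T : ℕ) :
    ∀ e, coefG2 hm R T e = -1 ∨ coefG2 hm R T e = 0 ∨ coefG2 hm R T e = 1 := by
  intro e; unfold coefG2; split_ifs <;> norm_num

lemma coefGL_mem (hm : 3 ≤ m) (R T : ℕ) :
    ∀ e, coefGL hm R T e = -1 ∨ coefGL hm R T e = 0 ∨ coefGL hm R T e = 1 := by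
  intro e; unfold coefGL; split_ifs <;> norm_num

/-- The open path `γ₁⁽ⁿ⁾` of Figure 2(a). -/
def rectG1 (hm : 3 ≤ m) (R T : ℕ) : LatPath m :=
  ⟨coefG1 hm R T, coefG1_mem hm R T, support_finite_of_bounded _ _ (coefG1_bound hm R T)⟩

/-- The open path `γ₂⁽ⁿ⁾ = γ⁽ⁿ⁾ - γ₁⁽ⁿ⁾` of Figure 2(a). -/
def rectG2 (hm : 3 ≤ m) (R T : ℕ) : LatPath m :=
  ⟨coefG2 hm R T, coefG2_mem hm R T, support_finite_of_bounded _ _ (coefG2_bound hm R T)⟩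

/-- The rectangular loop `γ⁽ⁿ⁾` of side lengths `2R` and `T`. -/
def rectLoop (hm : 3 ≤ m) (R T : ℕ) : LatPath m :=
  ⟨coefGL hm R T, coefGL_mem hm R T, support_finite_of_bounded _ _ (coefGL_bound hm R T)⟩

end Rect

/-- The finite-volume Marcu–Fredenhagen ratio
`ρ_N(γ₁,γ₂) = E^U[W_{γ₁}] E^U[W_{γ₂}] / E^U[W_{γ₁+γ₂}]`. -/
def mfRatioN (m : ℕ) (hm : 3 ≤ m) (N : ℕ) (β κ : ℝ) (R T : ℕ) : ℝ :=
  expU m N β κ (rectG1 hm R T) * expU m N β κ (rectG2 hm R T) /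
    expU m N β κ (rectLoop hm R T)

/-- The (infinite-volume) Marcu–Fredenhagen ratio
`ρ(γ₁⁽ⁿ⁾,γ₂⁽ⁿ⁾) = ⟨W_{γ₁}⟩ ⟨W_{γ₂}⟩ / ⟨W_{γ₁+γ₂}⟩` for the rectangle with side lengths
`2R` and `T`. -/
def mfRatio (m : ℕ) (hm : 3 ≤ m) (β κ : ℝ) (R T : ℕ) : ℝ :=
  wilsonLim m β κ (rectG1 hm R T) * wilsonLim m β κ (rectG2 hm R T) /
    wilsonLim m β κ (rectLoop hm R T)

/-! ## Constants -/

/-- `M₁ = 6(m-1)`. -/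
def M1 (m : ℕ) : ℕ := 6 * (m - 1)

/-- `M₂ = 8m - 12`. -/
def M2 (m : ℕ) : ℕ := 8 * m - 12

/-- The function whose argmin over `(0,1)` defines `α` and `κ₀^{(Higgs)}`. -/
def higgsF (m : ℕ) (a : ℝ) : ℝ := Real.log ((M1 m : ℝ) ^ 2 + 1 / a) / (4 * (1 - a))

/-- `α = argmin_{α' ∈ (0,1)} log(M₁² + 1/α') / (4(1-α'))`. -/
def higgsAlpha (m : ℕ) : ℝ :=
  if h : ∃ a ∈ Set.Ioo (0 : ℝ) 1, ∀ b ∈ Set.Ioo (0 : ℝ) 1, higgsF m a ≤ higgsF m b then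
    h.choose
  else 1 / 2

/-- `κ₀^{(Higgs)} = log(M₁² + 1/α) / (4(1-α))`. -/
def kappa0 (m : ℕ) : ℝ := higgsF m (higgsAlpha m)

/-- `β₀^{(conf)}`. -/
def beta0conf (m : ℕ) : ℝ :=
  sSup {β : ℝ | 0 ≤ β ∧ (M2 m : ℝ) ^ 2 * Real.tanh (2 * β) < 1 ∧
    ∃ a ∈ Set.Ioo (0 : ℝ) 1,
      (M2 m : ℝ) ^ 3 * Real.tanh (2 * β) ^ ((1 : ℝ) - a) /
          (1 - (M2 m : ℝ) ^ 2 * Real.tanh (2 * β) ^ ((1 : ℝ) - a)) < 2 * a}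

/-! ## Polymers and clusters (Higgs phase) -/

/-- The graph `G₁` on positively oriented edges: two distinct edges are adjacent iff some
plaquette of `B_N` has both of them (up to orientation) on its boundary. -/
def G1 (m N : ℕ) : SimpleGraph (PEdge m) where
  Adj e₁ e₂ := e₁ ≠ e₂ ∧ ∃ p ∈ plqBox m N, e₁ ∈ p.bEdges ∧ e₂ ∈ p.bEdges
  symm := by
    constructor
    rintro a b ⟨hne, p, hp, h1, h2⟩
    exact ⟨hne.symm, p, hp, h2, h1⟩
  loopless := by constructor; rintro a ⟨h, -⟩; exact h rfl

/-- The support of a 1-form, as a finset of positively oriented edges. -/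
def eSupp {m N : ℕ} (σ : Config1 m N) : Finset (PEdge m) :=
  (boxPE m N).filter fun e => evalE σ e ≠ 0

/-- The support of `dσ`, as a finset of positively oriented plaquettes. -/
def pSupp {m N : ℕ} (σ : Config1 m N) : Finset (PPlaq m) :=
  (plqBox m N).filter fun p => d1 σ p ≠ 0

/-- A polymer: a 1-form whose support induces a nonempty connected subgraph of `G₁`. -/
def IsPolymer {m N : ℕ} (η : Config1 m N) : Prop :=
  (SimpleGraph.induce (↑(eSupp η) : Set (PEdge m)) (G1 m N)).Connected

abbrev Polymer (m N : ℕ) := {η : Config1 m N // IsPolymer η}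

/-- `η ~ η'`: the union of the supports induces a connected subgraph of `G₁`. -/
def polyAdj {m N : ℕ} (η η' : Polymer m N) : Prop :=
  (SimpleGraph.induce ((↑(eSupp η.1) ∪ ↑(eSupp η'.1)) : Set (PEdge m)) (G1 m N)).Connected

/-- A cluster: a nonempty multiset of polymers which cannot be partitioned into two nonempty
sub-multisets with no `~`-relation between them. -/
def IsCluster {m N : ℕ} (S : Multiset (Polymer m N)) : Prop :=
  S ≠ 0 ∧ ¬ ∃ S₁ S₂ : Multiset (Polymer m N), S = S₁ + S₂ ∧ S₁ ≠ 0 ∧ S₂ ≠ 0 ∧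
    ∀ η₁ ∈ S₁, ∀ η₂ ∈ S₂, ¬ polyAdj η₁ η₂

/-- `‖S‖₁ = Σ_η n_S(η) |(supp η)⁺|`. -/
def norm1 {m N : ℕ} (S : Multiset (Polymer m N)) : ℕ :=
  (S.map fun η => (eSupp η.1).card).sum

/-- `‖S‖₂ = Σ_η n_S(η) |(supp dη)⁺|`. -/
def norm2 {m N : ℕ} (S : Multiset (Polymer m N)) : ℕ :=
  (S.map fun η => (pSupp η.1).card).sum

/-- `supp S = ∪_{η ∈ S} supp η`. -/
def suppS {m N : ℕ} (S : Multiset (Polymer m N)) : Finset (PEdge m) :=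
  S.toFinset.sup fun η => eSupp η.1

/-- `S(γ) = Σ_η n_S(η) η(γ) ∈ ℤ₂`. -/
def Sline {m N : ℕ} (S : Multiset (Polymer m N)) (γ : LatPath m) : ZMod 2 :=
  (S.map fun η => ∑ e ∈ γ.supp, (γ.coef e : ZMod 2) * evalE η.1 e).sum

/-- The activity `φ_{β,κ}(S) = exp(-4β‖S‖₂ - 4κ‖S‖₁)`. -/
def phiCl {m N : ℕ} (β κ : ℝ) (S : Multiset (Polymer m N)) : ℝ :=
  Real.exp (-4 * β * (norm2 S : ℝ) - 4 * κ * (norm1 S : ℝ))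

/-- The Ursell function of a list of polymers: the sum over all connected graphs on the index
set of `(-1)^{|E(G)|} ∏_{(i,j) ∈ E(G)} 1(η_i ~ η_j)`, graphs being encoded by Boolean
functions on unordered pairs of indices. -/
def ursellL {m N : ℕ} (l : List (Polymer m N)) : ℝ :=
  ∑ f : Sym2 (Fin l.length) → Bool,
    if (∀ e, f e = true → ¬ e.IsDiag) ∧
        (SimpleGraph.fromEdgeSet {e | f e = true}).Connected then
      (-1 : ℝ) ^ (Finset.univ.filter fun e => f e = true).card *
        (if ∀ i j : Fin l.length, f s(i, j) = true → polyAdj (l.get i) (l.get j) then 1 else 0)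
    else 0

/-- The Ursell function `U(S)` of a cluster. -/
def ursell {m N : ℕ} (S : Multiset (Polymer m N)) : ℝ := ursellL S.toList

/-- `Ψ_{β,κ}(S) = U(S) φ_{β,κ}(S)`. -/
def Psi {m N : ℕ} (β κ : ℝ) (S : Multiset (Polymer m N)) : ℝ := ursell S * phiCl β κ S

/-- The constant `C_ε` of (eq: cbeta*):
`C_ε = 4 sup_{N ≥ 1} sup_{e ∈ C₁(B_N)⁺} Σ_{S ∈ Ξ_{1⁺,1⁺,e}(B_N)} |Ψ_{0,κ₀+ε}(S)|`. -/
def Ceps (m : ℕ) (ε : ℝ) : ℝ :=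
  sSup {x : ℝ | ∃ N : ℕ, 1 ≤ N ∧ ∃ e ∈ boxPE m N,
    x = 4 * ∑' S : {S : Multiset (Polymer m N) // IsCluster S ∧ 1 ≤ norm1 S ∧ e ∈ suppS S},
      |Psi 0 (kappa0 m + ε) S.1|}

/-! ## High temperature expansion (confinement phase) -/

/-- `φ_a(j)`: `1` if `j = 0` and `tanh 2a` otherwise. -/
def phiHT (a : ℝ) (j : ZMod 2) : ℝ := if j = 0 then 1 else Real.tanh (2 * a)

/-- The codifferential `δω(e)` (mod 2): the sum of `ω` over the plaquettes of `B_N` whose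
boundary contains `e`. -/
def codiff {m N : ℕ} (ω : Config2 m N) (e : PEdge m) : ZMod 2 :=
  ∑ p ∈ (plqBox m N).filter (fun p => e ∈ p.bEdges), evalP ω p

/-- The high temperature weight `φ^γ_{β,κ}(ω)`. -/
def htWt {m N : ℕ} (β κ : ℝ) (γ : LatPath m) (ω : Config2 m N) : ℝ :=
  (∏ p ∈ plqBox m N, phiHT β (evalP ω p)) *
    ∏ e ∈ boxPE m N, phiHT κ (codiff ω e + (γ.coef e : ZMod 2)) / phiHT κ ((γ.coef e : ZMod 2))

/-- `Σ_{N,β,κ}[γ] = Σ_{ω ∈ Ω²(B_N,ℤ₂)} φ^γ_{β,κ}(ω)`. -/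
def htZ (m N : ℕ) (β κ : ℝ) (γ : LatPath m) : ℝ :=
  ∑ ω : Config2 m N, htWt β κ γ ω

/-! ## The graph `G₂` (confinement phase) -/

/-- The graph `G₂` on positively oriented plaquettes: two distinct plaquettes are adjacent iff
their boundaries share an edge. -/
def G2 (m N : ℕ) : SimpleGraph (PPlaq m) where
  Adj p₁ p₂ := p₁ ≠ p₂ ∧ ∃ e : PEdge m, e ∈ p₁.bEdges ∧ e ∈ p₂.bEdges
  symm := by
    constructor
    rintro a b ⟨hne, e, h1, h2⟩
    exact ⟨hne.symm, e, h2, h1⟩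
  loopless := by constructor; rintro a ⟨h, -⟩; exact h rfl

/-- The support of a 2-form, as a finset of positively oriented plaquettes. -/
def pSupp2 {m N : ℕ} (ω : Config2 m N) : Finset (PPlaq m) :=
  (plqBox m N).filter fun p => evalP ω p ≠ 0

/-! ## The free phase: closed 2-forms, chains and surfaces -/

/-- `dω = 0`: the sum of `ω` over the six faces of every 3-cell of `B_N` vanishes. -/
def Closed2 {m N : ℕ} (ω : Config2 m N) : Prop :=
  ∀ c : PCube m, c.d1 < c.d2 → c.d2 < c.d3 → (∀ p ∈ c.faces, p ∈ plqBox m N) →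
    (c.faces.map fun p => evalP ω p).sum = 0

/-- A `{-1,0,1}`-valued 1-chain supported on the edges of `B_N`, encoded via `Fin 3`. -/
abbrev BoxChain (m N : ℕ) := {e : PEdge m // e ∈ boxPE m N} → Fin 3

/-- The integer coefficient of a box chain at an edge. -/
def chainCoef {m N : ℕ} (c : BoxChain m N) (e : {e : PEdge m // e ∈ boxPE m N}) : ℤ :=
  ((c e : ℕ) : ℤ) - 1

/-- The number of edges in the support of a box chain. -/
def chainLen {m N : ℕ} (c : BoxChain m N) : ℕ :=
  (Finset.univ.filter fun e => chainCoef c e ≠ 0).card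

/-- The boundary `∂(γ + γ')` at a vertex, for a path `γ` and a box chain `γ'`. -/
def bndSum {m N : ℕ} (γ : LatPath m) (c : BoxChain m N) (v : Vertex m) : ℤ :=
  γ.bnd v + ∑ e : {e : PEdge m // e ∈ boxPE m N},
    chainCoef c e * ((if e.1.head = v then 1 else 0) - (if e.1.base = v then 1 else 0))

/-- The mod-2 boundary of a 2-chain `q` at the edge `e`. -/
def bnd2 {m N : ℕ} (q : Config2 m N) (e : PEdge m) : ZMod 2 :=
  ∑ p ∈ (plqBox m N).filter (fun p => e ∈ p.bEdges), evalP q p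

/-- The mod-2 1-chain `γ + γ'` on the edges of `B_N`. -/
def chainMod2 {m N : ℕ} (γ : LatPath m) (c : BoxChain m N)
    (e : {e : PEdge m // e ∈ boxPE m N}) : ZMod 2 :=
  ((γ.coef e.1 + chainCoef c e : ℤ) : ZMod 2)

/-- A choice of 2-chain (surface) `q_c` in `B_N` with `∂q_c = c` (mod 2), when one exists. -/
def surfOf {m N : ℕ} (c : {e : PEdge m // e ∈ boxPE m N} → ZMod 2) : Config2 m N :=
  if h : ∃ q : Config2 m N, ∀ e : {e : PEdge m // e ∈ boxPE m N}, bnd2 q e.1 = c e then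
    h.choose
  else 0

/-- `ω(q) = Σ_p q[p] ω(p) ∈ ℤ₂`. -/
def pairing {m N : ℕ} (ω q : Config2 m N) : ZMod 2 :=
  ∑ p : {p : PPlaq m // p ∈ plqBox m N}, q p * ω p

/-- `Ž_{N,β,κ}[γ]` of (eq: check Z). -/
def checkZ (m N : ℕ) (β κ : ℝ) (γ : LatPath m) : ℝ :=
  ∑ ω : Config2 m N,
    if Closed2 ω then
      ∑ c : BoxChain m N,
        if ∀ v : Vertex m, bndSum γ c v = 0 then
          Real.exp (2 * β * ∑ p ∈ plqBox m N, rho2 (evalP ω p)) *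
            Real.tanh (2 * κ) ^ chainLen c * rho2 (pairing ω (surfOf (chainMod2 γ c)))
        else 0
    else 0

/-- `Z^U_{N,β,κ}[γ] = Σ_σ e^{β Σ_p ρ(dσ(p)) + κ Σ_e ρ(σ(e))} ρ(σ(γ))`. -/
def ZUgamma (m N : ℕ) (β κ : ℝ) (γ : LatPath m) : ℝ :=
  ∑ σ : Config1 m N, wtU m N β κ σ * wilson γ σ

/-! ## The full lattice Higgs model with structure group `ℤ_n` -/

/-- `Ω¹(B_N, ℤ_n)`. -/
abbrev ConfE (m n N : ℕ) := {e : PEdge m // e ∈ boxPE m N} → ZMod n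

/-- `Ω⁰(B_N, ℤ_n)`. -/
abbrev ConfV (m n N : ℕ) := {v : Vertex m // v ∈ boxV m N} → ZMod n

def evalEn {m n N : ℕ} (σ : ConfE m n N) (e : PEdge m) : ZMod n :=
  if h : e ∈ boxPE m N then σ ⟨e, h⟩ else 0

def evalVn {m n N : ℕ} (φ : ConfV m n N) (v : Vertex m) : ZMod n :=
  if h : v ∈ boxV m N then φ ⟨v, h⟩ else 0

/-- `dσ(p)`, with orientation signs, for `ℤ_n`-valued 1-forms. -/
def d1n {m n N : ℕ} (σ : ConfE m n N) (p : PPlaq m) : ZMod n :=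
  evalEn σ ⟨p.base, p.dir1⟩ + evalEn σ ⟨p.base + unitVec m p.dir1, p.dir2⟩ -
    evalEn σ ⟨p.base + unitVec m p.dir2, p.dir1⟩ - evalEn σ ⟨p.base, p.dir2⟩

/-- `Re tr ρ(g) = cos(2π g / n)` for the faithful one-dimensional unitary representation of
`ℤ_n`. -/
def reRho (n : ℕ) (g : ZMod n) : ℝ := Real.cos (2 * Real.pi * ((ZMod.val g : ℕ) : ℝ) / (n : ℝ))

/-- The Boltzmann weight of the lattice Higgs model on `B_N` (sums over all oriented cells,
i.e. twice the sums over positive cells). -/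
def wtHn (m n N : ℕ) (β κ : ℝ) (σ : ConfE m n N) (φ : ConfV m n N) : ℝ :=
  Real.exp (2 * β * ∑ p ∈ plqBox m N, reRho n (d1n σ p) +
    2 * κ * ∑ e ∈ boxPE m N, reRho n (evalEn σ e - (evalVn φ e.head - evalVn φ e.base)))

/-- `E_{N,β,κ}[f(σ,φ)]`, where `f` is a function of (the extensions by zero of) the gauge and
Higgs field configurations. -/
def expHn (m n N : ℕ) [NeZero n] (β κ : ℝ)
    (f : (PEdge m → ZMod n) → (Vertex m → ZMod n) → ℝ) : ℝ :=
  (∑ σ : ConfE m n N, ∑ φ : ConfV m n N,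
      wtHn m n N β κ σ φ * f (fun e => evalEn σ e) (fun v => evalVn φ v)) /
    ∑ σ : ConfE m n N, ∑ φ : ConfV m n N, wtHn m n N β κ σ φ

/-! ## The full lattice Higgs model with structure group `ℤ₂` -/

abbrev ConfV2 (m N : ℕ) := {v : Vertex m // v ∈ boxV m N} → ZMod 2

def evalV2 {m N : ℕ} (φ : ConfV2 m N) (v : Vertex m) : ZMod 2 :=
  if h : v ∈ boxV m N then φ ⟨v, h⟩ else 0

def wtH2 (m N : ℕ) (β κ : ℝ) (σ : Config1 m N) (φ : ConfV2 m N) : ℝ :=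
  Real.exp (2 * β * ∑ p ∈ plqBox m N, rho2 (d1 σ p) +
    2 * κ * ∑ e ∈ boxPE m N, rho2 (evalE σ e - (evalV2 φ e.head - evalV2 φ e.base)))

/-- The vertices appearing as endpoints of edges of `γ`. -/
def vertsOf {m : ℕ} (γ : LatPath m) : Finset (Vertex m) :=
  γ.supp.biUnion fun e => {e.base, e.head}

/-- The Wilson line observable `W_γ(σ,φ) = ρ(σ(γ) - φ(∂γ))` of the full model. -/
def wilsonFull {m N : ℕ} (γ : LatPath m) (σ : Config1 m N) (φ : ConfV2 m N) : ℝ :=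
  rho2 ((∑ e ∈ γ.supp, (γ.coef e : ZMod 2) * evalE σ e) -
    ∑ v ∈ vertsOf γ, ((γ.bnd v : ℤ) : ZMod 2) * evalV2 φ v)

/-- `E_{N,β,κ}[W_γ(σ,φ)]` for the full `ℤ₂` lattice Higgs model. -/
def expFull2 (m N : ℕ) (β κ : ℝ) (γ : LatPath m) : ℝ :=
  (∑ σ : Config1 m N, ∑ φ : ConfV2 m N, wtH2 m N β κ σ φ * wilsonFull γ σ φ) /
    ∑ σ : Config1 m N, ∑ φ : ConfV2 m N, wtH2 m N β κ σ φ

/-! ## Distances -/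

/-- Graph (ℓ¹) distance between two vertices of `ℤ^m`. -/
def vdist {m : ℕ} (x y : Vertex m) : ℕ := ∑ i, (x i - y i).natAbs

/-- Distance between two edges: length of a shortest path of `ℤ^m` connecting them. -/
def edist {m : ℕ} (e₁ e₂ : PEdge m) : ℕ :=
  min (min (vdist e₁.base e₂.base) (vdist e₁.base e₂.head))
    (min (vdist e₁.head e₂.base) (vdist e₁.head e₂.head))

/-- `dist(γ₁,γ₂)`: the distance between the supports of `γ₁` and `γ₂`. -/
def pathDist {m : ℕ} (γ₁ γ₂ : LatPath m) : ℕ :=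
  sInf {d : ℕ | ∃ e₁ ∈ γ₁.supp, ∃ e₂ ∈ γ₂.supp, d = edist e₁ e₂}

/-! ## The free phase: the graph `G₀` and closed connected paths -/

/-- The graph `G₀` on positively oriented edges: two distinct edges are adjacent iff they
share an endpoint. -/
def G0 (m : ℕ) : SimpleGraph (PEdge m) where
  Adj e₁ e₂ := e₁ ≠ e₂ ∧
    (e₁.base = e₂.base ∨ e₁.base = e₂.head ∨ e₁.head = e₂.base ∨ e₁.head = e₂.head)
  symm := by
    constructor
    rintro a b ⟨hne, h⟩
    refine ⟨hne.symm, ?_⟩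
    rcases h with h | h | h | h
    · exact Or.inl h.symm
    · exact Or.inr (Or.inr (Or.inl h.symm))
    · exact Or.inr (Or.inl h.symm)
    · exact Or.inr (Or.inr (Or.inr h.symm))
  loopless := by constructor; rintro a ⟨h, -⟩; exact h rfl

/-- `γ ~ δ` for paths: the union of the supports induces a connected subgraph of `G₀`
(with the convention that every path is adjacent to itself). -/
def pathAdj {m : ℕ} (γ δ : LatPath m) : Prop :=
  γ = δ ∨ (SimpleGraph.induce ((↑γ.supp ∪ ↑δ.supp) : Set (PEdge m)) (G0 m)).Connected

/-- `γ ∈ Λ₁` (free phase): a closed path in `B_N` whose support induces a connected subgraph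
of `G₀`. -/
def InLambda1 (m N : ℕ) (γ : LatPath m) : Prop :=
  γ.supp ⊆ boxPE m N ∧ (∀ v, γ.bnd v = 0) ∧
    (SimpleGraph.induce (↑γ.supp : Set (PEdge m)) (G0 m)).Connected

/-- `v ~ γ`: the vertex `v` is an endpoint of an edge of `γ`. -/
def vertAdj {m : ℕ} (v : Vertex m) (γ : LatPath m) : Prop :=
  ∃ e ∈ γ.supp, e.base = v ∨ e.head = v

section HighTemperatureExpansion

lemma zmod_two_cases (a : ZMod 2) : a = 0 ∨ a = 1 := by revert a; decide

lemma sum_zmod_two (f : ZMod 2 → ℝ) : ∑ j : ZMod 2, f j = f 0 + f 1 := Fin.sum_univ_two f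

@[simp] lemma rho2_zero : rho2 0 = 1 := if_pos rfl

@[simp] lemma rho2_one : rho2 1 = -1 := if_neg one_ne_zero

@[simp] lemma phiHT_zero (a : ℝ) : phiHT a 0 = 1 := if_pos rfl

@[simp] lemma phiHT_one (a : ℝ) : phiHT a 1 = Real.tanh (2 * a) := if_neg one_ne_zero

lemma rho2_add (a b : ZMod 2) : rho2 (a + b) = rho2 a * rho2 b := by
  rcases zmod_two_cases a with rfl | rfl <;> rcases zmod_two_cases b with rfl | rfl <;>
    simp [show (1 + 1 : ZMod 2) = 0 from rfl]

lemma rho2_sum {ι : Type*} (s : Finset ι) (f : ι → ZMod 2) :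
    rho2 (∑ i ∈ s, f i) = ∏ i ∈ s, rho2 (f i) := by
  induction s using Finset.cons_induction with
  | empty => simp
  | cons a s ha ih => rw [Finset.sum_cons, Finset.prod_cons, rho2_add, ih]

lemma exp_two_mul_rho2 (β : ℝ) (g : ZMod 2) :
    Real.exp (2 * β * rho2 g) = Real.cosh (2 * β) * ∑ j : ZMod 2, phiHT β j * rho2 (j * g) := by
  have hc : Real.cosh (2 * β) ≠ 0 := (Real.cosh_pos _).ne'
  rcases zmod_two_cases g with rfl | rfl <;>
    simp [sum_zmod_two, Real.tanh_eq_sinh_div_cosh, mul_add] <;> field_simp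
  · rw [Real.cosh_add_sinh]
  · rw [← Real.cosh_sub_sinh]; ring

lemma sum_rho2_mul_exp (κ : ℝ) (a : ZMod 2) :
    ∑ s : ZMod 2, rho2 (a * s) * Real.exp (2 * κ * rho2 s) = 2 * Real.cosh (2 * κ) * phiHT κ a := by
  have hc : Real.cosh (2 * κ) ≠ 0 := (Real.cosh_pos _).ne'
  rcases zmod_two_cases a with rfl | rfl <;> simp [sum_zmod_two, Real.tanh_eq_sinh_div_cosh]
  · rw [Real.cosh_eq]; ring
  · field_simp; rw [Real.sinh_eq]; ring

variable {P E : Type*} [Fintype P] [Fintype E] [DecidableEq P] [DecidableEq E]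

lemma prod_exp_rho2_eq_sum (β : ℝ) (g : P → ZMod 2) :
    ∏ p, Real.exp (2 * β * rho2 (g p)) =
      Real.cosh (2 * β) ^ Fintype.card P *
        ∑ ω : P → ZMod 2, (∏ p, phiHT β (ω p)) * rho2 (∑ p, ω p * g p) := by
  simp_rw [exp_two_mul_rho2, Finset.prod_mul_distrib, Finset.prod_const, Fintype.prod_sum,
    rho2_sum, ← Finset.prod_mul_distrib, Finset.card_univ]

lemma sum_rho2_mul_prod_exp (κ : ℝ) (a : E → ZMod 2) :
    ∑ σ : E → ZMod 2, rho2 (∑ e, a e * σ e) * ∏ e, Real.exp (2 * κ * rho2 (σ e)) =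
      (2 * Real.cosh (2 * κ)) ^ Fintype.card E * ∏ e, phiHT κ (a e) := by
  simp_rw [rho2_sum, ← Finset.prod_mul_distrib]
  rw [← Fintype.prod_sum fun e s => rho2 (a e * s) * Real.exp (2 * κ * rho2 s)]
  simp_rw [sum_rho2_mul_exp]
  rw [Finset.prod_mul_distrib, Finset.prod_const, Finset.card_univ]

theorem sum_exp_mul_rho2_eq_sum_prod_phiHT (d : (E → ZMod 2) → P → ZMod 2)
    (δ : (P → ZMod 2) → E → ZMod 2) (hdδ : ∀ σ ω, ∑ p, ω p * d σ p = ∑ e, δ ω e * σ e)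
    (β κ : ℝ) (γ : E → ZMod 2) :
    ∑ σ : E → ZMod 2, Real.exp (2 * β * ∑ p, rho2 (d σ p) + 2 * κ * ∑ e, rho2 (σ e)) *
        rho2 (∑ e, γ e * σ e) =
      Real.cosh (2 * β) ^ Fintype.card P * (2 * Real.cosh (2 * κ)) ^ Fintype.card E *
        ∑ ω : P → ZMod 2, (∏ p, phiHT β (ω p)) * ∏ e, phiHT κ (δ ω e + γ e) := by
  calc _ = ∑ σ : E → ZMod 2, Real.cosh (2 * β) ^ Fintype.card P *
        ∑ ω : P → ZMod 2, (∏ p, phiHT β (ω p)) *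
          (rho2 (∑ e, (δ ω e + γ e) * σ e) * ∏ e, Real.exp (2 * κ * rho2 (σ e))) := by
        refine Finset.sum_congr rfl fun σ _ => ?_
        rw [Real.exp_add, Finset.mul_sum, Finset.mul_sum, Real.exp_sum, Real.exp_sum,
          prod_exp_rho2_eq_sum]
        simp only [Finset.mul_sum, Finset.sum_mul, mul_assoc]
        refine Finset.sum_congr rfl fun ω _ => ?_
        simp_rw [hdδ, add_mul, Finset.sum_add_distrib, rho2_add]
        ring
    _ = Real.cosh (2 * β) ^ Fintype.card P * ∑ ω : P → ZMod 2, (∏ p, phiHT β (ω p)) *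
          ∑ σ : E → ZMod 2, rho2 (∑ e, (δ ω e + γ e) * σ e) *
            ∏ e, Real.exp (2 * κ * rho2 (σ e)) := by
        simp_rw [Finset.mul_sum]
        exact Finset.sum_comm
    _ = _ := by
        simp_rw [sum_rho2_mul_prod_exp, Finset.mul_sum]
        refine Finset.sum_congr rfl fun ω _ => ?_
        ring

lemma tanh_ne_zero {x : ℝ} (hx : x ≠ 0) : Real.tanh x ≠ 0 := by
  rw [Real.tanh_eq_sinh_div_cosh]
  exact div_ne_zero (Real.sinh_ne_zero.mpr hx) (Real.cosh_pos x).ne'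

namespace LatPath

variable {m : ℕ}

lemma intCast_coef_eq_zero_iff (γ : LatPath m) (e : PEdge m) :
    ((γ.coef e : ℤ) : ZMod 2) = 0 ↔ e ∉ γ.supp := by
  rw [mem_supp, not_not]
  rcases γ.coef_mem e with h | h | h <;> rw [h] <;> decide

lemma supp_zero : (zero m).supp = ∅ := by
  ext e
  simp [mem_supp, zero]

lemma supp_addDisjoint (γ₁ γ₂ : LatPath m) (h : Disjoint γ₁.supp γ₂.supp) :
    (γ₁.addDisjoint γ₂ h).supp = γ₁.supp ∪ γ₂.supp := by
  ext e
  simp only [mem_supp, Finset.mem_union]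
  show γ₁.coef e + γ₂.coef e ≠ 0 ↔ _
  by_cases h₁ : γ₁.coef e = 0
  · simp [h₁]
  · have h₂ : γ₂.coef e = 0 := by
      by_contra h₂
      exact Finset.disjoint_left.mp h ((mem_supp _ _).mpr h₁) ((mem_supp _ _).mpr h₂)
    simp [h₁, h₂]

end LatPath

variable {m N : ℕ}

lemma evalE_val (σ : Config1 m N) (e : {e : PEdge m // e ∈ boxPE m N}) : evalE σ e.1 = σ e :=
  dif_pos e.2

lemma evalP_val (ω : Config2 m N) (p : {p : PPlaq m // p ∈ plqBox m N}) : evalP ω p.1 = ω p :=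
  dif_pos p.2

lemma wtU_eq_exp_sum (β κ : ℝ) (σ : Config1 m N) :
    wtU m N β κ σ = Real.exp (2 * β * ∑ p : {p : PPlaq m // p ∈ plqBox m N}, rho2 (d1 σ p.1) +
      2 * κ * ∑ e : {e : PEdge m // e ∈ boxPE m N}, rho2 (σ e)) := by
  simp_rw [wtU, ← Finset.sum_coe_sort (plqBox m N), ← Finset.sum_coe_sort (boxPE m N),
    evalE_val]

lemma wilson_eq_rho2_sum (γ : LatPath m) (hγ : γ.supp ⊆ boxPE m N) (σ : Config1 m N) :
    wilson γ σ = rho2 (∑ e : {e : PEdge m // e ∈ boxPE m N}, (γ.coef e.1 : ZMod 2) * σ e) := by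
  rw [wilson, Finset.sum_subset hγ fun e _ he => by
    rw [(γ.intCast_coef_eq_zero_iff e).mpr he, zero_mul]]
  simp_rw [← Finset.sum_coe_sort (boxPE m N), evalE_val]

lemma sum_evalP_mul_d1_eq_sum_codiff_mul_evalE (σ : Config1 m N) (ω : Config2 m N) :
    ∑ p ∈ plqBox m N, evalP ω p * d1 σ p = ∑ e ∈ boxPE m N, codiff ω e * evalE σ e := by
  have hp : ∀ p ∈ plqBox m N, evalP ω p * d1 σ p =
      ∑ e ∈ boxPE m N, if e ∈ p.bEdges then evalP ω p * evalE σ e else 0 := by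
    intro p _
    rw [d1, Finset.mul_sum, Finset.sum_ite_mem]
    refine (Finset.sum_subset Finset.inter_subset_right fun e he hne => ?_).symm
    rw [evalE, dif_neg fun h => hne (Finset.mem_inter.mpr ⟨h, he⟩), mul_zero]
  rw [Finset.sum_congr rfl hp, Finset.sum_comm]
  exact Finset.sum_congr rfl fun e _ => by rw [codiff, Finset.sum_mul, Finset.sum_filter]

lemma sum_mul_d1_eq_sum_codiff_mul (σ : Config1 m N) (ω : Config2 m N) :
    ∑ p : {p : PPlaq m // p ∈ plqBox m N}, ω p * d1 σ p.1 =
      ∑ e : {e : PEdge m // e ∈ boxPE m N}, codiff ω e.1 * σ e := by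
  simpa only [← Finset.sum_coe_sort (plqBox m N), ← Finset.sum_coe_sort (boxPE m N), evalP_val,
    evalE_val] using sum_evalP_mul_d1_eq_sum_codiff_mul_evalE σ ω

lemma prod_phiHT_coef (κ : ℝ) (γ : LatPath m) (hγ : γ.supp ⊆ boxPE m N) :
    ∏ e ∈ boxPE m N, phiHT κ (γ.coef e : ZMod 2) = Real.tanh (2 * κ) ^ γ.supp.card := by
  have h : ∀ e, phiHT κ (γ.coef e : ZMod 2) = if e ∈ γ.supp then Real.tanh (2 * κ) else 1 := by
    intro e
    by_cases he : e ∈ γ.supp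
    · rw [if_pos he, phiHT, if_neg ((γ.intCast_coef_eq_zero_iff e).not_left.mpr he)]
    · rw [if_neg he, (γ.intCast_coef_eq_zero_iff e).mpr he, phiHT_zero]
  simp_rw [h, Finset.prod_ite_mem, Finset.inter_eq_right.mpr hγ, Finset.prod_const]

lemma tanh_pow_mul_htZ {κ : ℝ} (hκ : κ ≠ 0) (β : ℝ) (γ : LatPath m) (hγ : γ.supp ⊆ boxPE m N) :
    Real.tanh (2 * κ) ^ γ.supp.card * htZ m N β κ γ =
      ∑ ω : Config2 m N, (∏ p ∈ plqBox m N, phiHT β (evalP ω p)) *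
        ∏ e ∈ boxPE m N, phiHT κ (codiff ω e + γ.coef e) := by
  have ht : Real.tanh (2 * κ) ^ γ.supp.card ≠ 0 := pow_ne_zero _ (tanh_ne_zero (by simpa))
  rw [htZ, Finset.mul_sum]
  refine Finset.sum_congr rfl fun ω _ => ?_
  rw [htWt, Finset.prod_div_distrib, prod_phiHT_coef κ γ hγ]
  field_simp

lemma sum_wtU_mul_wilson {κ : ℝ} (hκ : κ ≠ 0) (β : ℝ) (γ : LatPath m)
    (hγ : γ.supp ⊆ boxPE m N) :
    ∑ σ : Config1 m N, wtU m N β κ σ * wilson γ σ =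
      Real.cosh (2 * β) ^ (plqBox m N).card * (2 * Real.cosh (2 * κ)) ^ (boxPE m N).card *
        (Real.tanh (2 * κ) ^ γ.supp.card * htZ m N β κ γ) := by
  have hdual := sum_exp_mul_rho2_eq_sum_prod_phiHT
    (fun (σ : Config1 m N) (p : {p : PPlaq m // p ∈ plqBox m N}) => d1 σ p.1)
    (fun ω (e : {e : PEdge m // e ∈ boxPE m N}) => codiff ω e.1) sum_mul_d1_eq_sum_codiff_mul
    β κ fun e => (γ.coef e.1 : ZMod 2)
  simp only [← wtU_eq_exp_sum, ← wilson_eq_rho2_sum γ hγ] at hdual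
  rw [hdual, tanh_pow_mul_htZ hκ β γ hγ, Fintype.card_coe, Fintype.card_coe]
  simp_rw [← Finset.prod_coe_sort (plqBox m N), ← Finset.prod_coe_sort (boxPE m N), evalP_val]

lemma expU_eq_tanh_pow_mul_htZ_div {κ : ℝ} (hκ : κ ≠ 0) (β : ℝ) (γ : LatPath m)
    (hγ : γ.supp ⊆ boxPE m N) :
    expU m N β κ γ =
      Real.tanh (2 * κ) ^ γ.supp.card * htZ m N β κ γ / htZ m N β κ (LatPath.zero m) := by
  have hZ₀ := sum_wtU_mul_wilson (N := N) hκ β (LatPath.zero m)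
    (by simp [LatPath.supp_zero])
  simp only [wilson, LatPath.supp_zero, Finset.sum_empty, rho2_zero, mul_one,
    Finset.card_empty, pow_zero, one_mul] at hZ₀
  have hC : Real.cosh (2 * β) ^ (plqBox m N).card * (2 * Real.cosh (2 * κ)) ^ (boxPE m N).card
      ≠ 0 := by positivity
  rw [expU, hZ₀, sum_wtU_mul_wilson hκ β γ hγ, mul_div_mul_left _ _ hC]

end HighTemperatureExpansion

theorem high_temperature_expansion_general (m N : ℕ) (β κ : ℝ)
    (hκ : 0 < κ) :
    (∀ γ : LatPath m, γ.supp ⊆ boxPE m N →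
        expU m N β κ γ =
          Real.tanh (2 * κ) ^ γ.supp.card * htZ m N β κ γ / htZ m N β κ (LatPath.zero m)) ∧
      ∀ (γ₁ γ₂ : LatPath m), γ₁.supp ⊆ boxPE m N → γ₂.supp ⊆ boxPE m N →
        γ₁.supp.Nonempty → γ₂.supp.Nonempty → ∀ hdisj : Disjoint γ₁.supp γ₂.supp,
        γ₁.SameEndpoints γ₂ →
        expU m N β κ γ₁ * expU m N β κ γ₂ / expU m N β κ (γ₁.addDisjoint γ₂ hdisj) =
          htZ m N β κ γ₁ * htZ m N β κ γ₂ /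
            (htZ m N β κ (γ₁.addDisjoint γ₂ hdisj) * htZ m N β κ (LatPath.zero m)) := by
  have hκ₀ : κ ≠ 0 := hκ.ne'
  refine ⟨fun γ hγ => expU_eq_tanh_pow_mul_htZ_div hκ₀ β γ hγ,
    fun γ₁ γ₂ h₁ h₂ _ _ hdisj _ => ?_⟩
  have hsupp := LatPath.supp_addDisjoint γ₁ γ₂ hdisj
  rw [expU_eq_tanh_pow_mul_htZ_div hκ₀ β γ₁ h₁, expU_eq_tanh_pow_mul_htZ_div hκ₀ β γ₂ h₂,
    expU_eq_tanh_pow_mul_htZ_div hκ₀ β _ (hsupp ▸ Finset.union_subset h₁ h₂), hsupp,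
    Finset.card_union_of_disjoint hdisj, pow_add]
  have ht : Real.tanh (2 * κ) ≠ 0 := tanh_ne_zero (by simpa)
  -- With Lean's `x / 0 = 0`, both sides vanish when either partition function below does.
  rcases eq_or_ne (htZ m N β κ (LatPath.zero m)) 0 with h₀ | h₀
  · simp [h₀]
  rcases eq_or_ne (htZ m N β κ (γ₁.addDisjoint γ₂ hdisj)) 0 with h₁₂ | h₁₂
  · simp [h₁₂]
  field_simp

/-- the high temperature expansion of Wilson line expectations. -/
theorem high_temperature_expansion (m N : ℕ) (hm : 3 ≤ m) (β κ : ℝ)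
    (hβ : 0 ≤ β) (hκ : 0 < κ) :
    (∀ γ : LatPath m, γ.supp ⊆ boxPE m N →
        expU m N β κ γ =
          Real.tanh (2 * κ) ^ γ.supp.card * htZ m N β κ γ / htZ m N β κ (LatPath.zero m)) ∧
      ∀ (γ₁ γ₂ : LatPath m), γ₁.supp ⊆ boxPE m N → γ₂.supp ⊆ boxPE m N →
        γ₁.supp.Nonempty → γ₂.supp.Nonempty → ∀ hdisj : Disjoint γ₁.supp γ₂.supp,
        γ₁.SameEndpoints γ₂ →
        expU m N β κ γ₁ * expU m N β κ γ₂ / expU m N β κ (γ₁.addDisjoint γ₂ hdisj) =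
          htZ m N β κ γ₁ * htZ m N β κ γ₂ /
            (htZ m N β κ (γ₁.addDisjoint γ₂ hdisj) * htZ m N β κ (LatPath.zero m)) :=
  high_temperature_expansion_general m N β κ hκ

end LatticeHiggs
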